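/- In a core input-output network G, if κ is a node with σᵘ(κ) ≺ ρ for a super-simple node ρ, then there exists a simple path from ι to κ avoiding ρ; hence ρ is not a super-simple node of G(κ). -/

import Mathlib

/-- A simple (directed) path from `a` to `b`: nonempty node list, consecutive arrows,
no repeated nodes. -/
def IsSPath {V : Type*} (E : V → V → Prop) (a b : V) (p : List V) : Prop :=
  p.Chain' E ∧ p.Nodup ∧ p.head? = some a ∧ p.getLast? = some b

/-- An `ιo`-simple path. -/
def IoSPath {V : Type*} (E : V → V → Prop) (ι o : V) (p : List V) : Prop :=
  IsSPath E ι o p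

/-- A node is simple if it lies on some `ιo`-simple path. -/
def SimpleNode {V : Type*} (E : V → V → Prop) (ι o v : V) : Prop :=
  ∃ p, IoSPath E ι o p ∧ v ∈ p

/-- A node is appendage if it is not simple. -/
def Appendage {V : Type*} (E : V → V → Prop) (ι o v : V) : Prop :=
  ¬ SimpleNode E ι o v

/-- A node is super-simple if it lies on every `ιo`-simple path. -/
def SuperSimple {V : Type*} (E : V → V → Prop) (ι o v : V) : Prop :=
  ∀ p, IoSPath E ι o p → v ∈ p

/-- A core network: every node is reachable from `ι` and reaches `o`. -/
def Core {V : Type*} (E : V → V → Prop) (ι o : V) : Prop :=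
  ∀ v, Relation.ReflTransGen E ι v ∧ Relation.ReflTransGen E v o

/-- `a` occurs (strictly) before `b` on some `ιo`-simple path. -/
def OccBefore {V : Type*} (E : V → V → Prop) (ι o a b : V) : Prop :=
  ∃ p, IoSPath E ι o p ∧ [a, b].Sublist p

/-- Strict partial order on simple nodes induced by super-simple nodes:
`a ≺ b` iff there is a super-simple node `ρ` with `a` (weakly) before `ρ`
and `ρ` (weakly) before `b` along `ιo`-simple paths, and `a ≠ b`. -/
def SLt {V : Type*} (E : V → V → Prop) (ι o a b : V) : Prop :=
  a ≠ b ∧ ∃ ρ, SuperSimple E ι o ρ ∧ (a = ρ ∨ OccBefore E ι o a ρ) ∧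
    (b = ρ ∨ OccBefore E ι o ρ b)

/-- Adjacent (consecutive) super-simple nodes. -/
def AdjSS {V : Type*} (E : V → V → Prop) (ι o ρ ρ' : V) : Prop :=
  SuperSimple E ι o ρ ∧ SuperSimple E ι o ρ' ∧ SLt E ι o ρ ρ' ∧
  ¬ ∃ ρ'', SuperSimple E ι o ρ'' ∧ SLt E ι o ρ ρ'' ∧ SLt E ι o ρ'' ρ'

/-- The simple subnetwork between adjacent super-simple nodes `ρ ≺ ρ'`. -/
def SimpleSubnet {V : Type*} (E : V → V → Prop) (ι o ρ ρ' : V) : Set V :=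
  {σ | SimpleNode E ι o σ ∧ SLt E ι o ρ σ ∧ SLt E ι o σ ρ'}

/-- Two simple nodes lie in the same simple subnetwork. -/
def SameSimpleSubnet {V : Type*} (E : V → V → Prop) (ι o a b : V) : Prop :=
  ∃ ρ ρ', AdjSS E ι o ρ ρ' ∧ a ∈ SimpleSubnet E ι o ρ ρ' ∧
    b ∈ SimpleSubnet E ι o ρ ρ'

/-- `a ⪯ b`: either `a ≺ b`, or `a = b` is super-simple, or `a`, `b` lie in
the same simple subnetwork. -/
def SLe {V : Type*} (E : V → V → Prop) (ι o a b : V) : Prop :=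
  SLt E ι o a b ∨ (a = b ∧ SuperSimple E ι o a) ∨ SameSimpleSubnet E ι o a b

/-- An appendage path from `a` to `b`: a simple path containing an appendage
node, all of whose nodes other than the endpoints are appendage. -/
def AppPath {V : Type*} (E : V → V → Prop) (ι o a b : V) (p : List V) : Prop :=
  IsSPath E a b p ∧ (∃ x ∈ p, Appendage E ι o x) ∧
  ∀ x ∈ p, x ≠ a → x ≠ b → Appendage E ι o x

/-- Reachability inside a set of nodes. -/
def ReachIn {V : Type*} (E : V → V → Prop) (s : Set V) (a b : V) : Prop :=
  Relation.ReflTransGen (fun x y => E x y ∧ x ∈ s ∧ y ∈ s) a b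

/-- `a` and `b` belong to the same transitive (strongly connected) component
of the subnetwork induced on `s`. -/
def SameTCIn {V : Type*} (E : V → V → Prop) (s : Set V) (a b : V) : Prop :=
  a ∈ s ∧ b ∈ s ∧ ReachIn E s a b ∧ ReachIn E s b a

/-- A super-appendage node: an appendage node whose transitive component in
every complementary subnetwork `C_S` consists only of appendage nodes. -/
def SuperAppendage {V : Type*} (E : V → V → Prop) (ι o τ : V) : Prop :=
  Appendage E ι o τ ∧ ∀ p, IoSPath E ι o p → τ ∉ p →
    ∀ x, SameTCIn E {v | v ∉ p} τ x → Appendage E ι o x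

/-- An appendage subnetwork: a transitive component of the subnetwork of
super-appendage nodes. -/
def IsAppSubnet {V : Type*} (E : V → V → Prop) (ι o : V) (A : Set V) : Prop :=
  ∃ τ, SuperAppendage E ι o τ ∧
    A = {x | SameTCIn E {v | SuperAppendage E ι o v} τ x}

/-- There is an appendage path from `σ` to `κ`. -/
def HasAppPathTo {V : Type*} (E : V → V → Prop) (ι o σ κ : V) : Prop :=
  ∃ p, AppPath E ι o σ κ p

/-- `σ = σᵘ(κ)`: if `κ` is simple then `σ = κ`; otherwise `σ` is a minimal
upstream simple node with an appendage path to `κ`. -/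
def IsSigmaU {V : Type*} (E : V → V → Prop) (ι o κ σ : V) : Prop :=
  (SimpleNode E ι o κ ∧ σ = κ) ∨
  (Appendage E ι o κ ∧ SimpleNode E ι o σ ∧ HasAppPathTo E ι o σ κ ∧
    ∀ σ', SimpleNode E ι o σ' → HasAppPathTo E ι o σ' κ → ¬ SLt E ι o σ' σ)

/-- There is an appendage path from some node of `A` to `σ`. -/
def HasAppPathFromSet {V : Type*} (E : V → V → Prop) (ι o : V) (A : Set V)
    (σ : V) : Prop :=
  ∃ τ ∈ A, ∃ p, AppPath E ι o τ σ p

/-- `σ = σᵈ(A)`: a maximal downstream simple node with an appendage path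
from `A`. -/
def IsSigmaD {V : Type*} (E : V → V → Prop) (ι o : V) (A : Set V) (σ : V) : Prop :=
  SimpleNode E ι o σ ∧ HasAppPathFromSet E ι o A σ ∧
    ∀ σ', SimpleNode E ι o σ' → HasAppPathFromSet E ι o A σ' → ¬ SLt E ι o σ σ'

/-- A simple (directed) cycle, given by its list of distinct nodes with a
closing arrow from the last node back to the first. -/
def IsSimpleCycle {V : Type*} (E : V → V → Prop) (c : List V) : Prop :=
  c.Chain' E ∧ c.Nodup ∧ ∃ a b, c.head? = some a ∧ c.getLast? = some b ∧ E b a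

/-- `τ` is a linked appendage node of the simple subnetwork determined by the
adjacent super-simple pair `ρ ≺ ρ'`. -/
def Linked {V : Type*} (E : V → V → Prop) (ι o ρ ρ' τ : V) : Prop :=
  Appendage E ι o τ ∧ ¬ SuperAppendage E ι o τ ∧
  ∃ p, IoSPath E ι o p ∧ τ ∉ p ∧ ∀ x, SameTCIn E {v | v ∉ p} τ x →
    x = τ ∨ x ∈ SimpleSubnet E ι o ρ ρ' ∨
      (Appendage E ι o x ∧ ¬ SuperAppendage E ι o x)

/-- The structural subnetwork determined by adjacent super-simple nodes
`ρ ≺ ρ'`: the two super-simple nodes, the simple subnetwork between them,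
and its linked appendage nodes. -/
def StructuralSet {V : Type*} (E : V → V → Prop) (ι o ρ ρ' : V) : Set V :=
  {ρ, ρ'} ∪ SimpleSubnet E ι o ρ ρ' ∪ {τ | Linked E ι o ρ ρ' τ}

/-- `L` is a structural subnetwork. -/
def IsStructSubnet {V : Type*} (E : V → V → Prop) (ι o : V) (L : Set V) : Prop :=
  ∃ ρ ρ', AdjSS E ι o ρ ρ' ∧ L = StructuralSet E ι o ρ ρ'

/-!
If `ρ` is super-simple and `σᵘ(κ) ≺ ρ`, then `σᵘ(κ)` occurs strictly before `ρ` on some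
`ιo`-simple path: otherwise `ρ` would come before an intermediate node `c` on one path and after
it on another, and splicing the two paths at `c` would give an `ιo`-walk avoiding `ρ`. The initial
segment of that path reaches `σᵘ(κ)` without meeting `ρ`, and an appendage path from `σᵘ(κ)` to
`κ` cannot meet the simple node `ρ`; shortening the concatenated walk gives the simple path.
-/

section
variable {V : Type*} {E : V → V → Prop} {ι o a b x : V}

theorem ReachIn.mono {s t : Set V} (hst : s ⊆ t) (h : ReachIn E s a b) : ReachIn E t a b :=
  Relation.ReflTransGen.mono (fun _ _ h => ⟨h.1, hst h.2.1, hst h.2.2⟩) _ _ h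

theorem ReachIn.trans {s : Set V} {c : V} (hab : ReachIn E s a b) (hbc : ReachIn E s b c) :
    ReachIn E s a c :=
  Relation.ReflTransGen.trans hab hbc

theorem ReachIn.mem_of_mem {s : Set V} (h : ReachIn E s a b) (ha : a ∈ s) : b ∈ s := by
  rcases Relation.ReflTransGen.cases_tail h with rfl | ⟨_, _, _, _, hb⟩
  exacts [ha, hb]

theorem reachIn_of_isChain :
    ∀ {p : List V} {a : V}, p.IsChain E → p.head? = some a → p.getLast? = some b →
      ReachIn E {y | y ∈ p} a b
  | [], _, _, ha, _ => by simp at ha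
  | [x], _, _, ha, hb => by
    obtain rfl : x = _ := by simpa using ha
    obtain rfl : x = b := by simpa using hb
    exact Relation.ReflTransGen.refl
  | x :: y :: t, _, hc, ha, hb => by
    obtain rfl : x = _ := by simpa using ha
    obtain ⟨hxy, hc⟩ := List.isChain_cons.1 hc
    have hrest := reachIn_of_isChain hc rfl (by simpa using hb)
    refine Relation.ReflTransGen.head ⟨hxy y rfl, by simp, by simp⟩ (hrest.mono ?_)
    intro z hz
    simp_all

theorem IsSPath.reachIn {p : List V} (h : IsSPath E a b p) : ReachIn E {y | y ∈ p} a b :=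
  reachIn_of_isChain h.1 h.2.2.1 h.2.2.2

theorem IsSPath.cons {c : V} {p : List V} (h : IsSPath E c b p) (hac : E a c) (ha : a ∉ p) :
    IsSPath E a b (a :: p) := by
  obtain ⟨hc, hn, hh, hl⟩ := h
  refine ⟨List.isChain_cons.2 ⟨?_, hc⟩, List.nodup_cons.2 ⟨ha, hn⟩, rfl, ?_⟩
  · simpa [hh] using hac
  · simp [List.getLast?_cons, hl]

theorem IsSPath.suffix {l r : List V} (h : IsSPath E a b (l ++ x :: r)) :
    IsSPath E x b (x :: r) :=
  ⟨h.1.suffix (List.suffix_append l _), h.2.1.sublist (List.sublist_append_right l _), rfl,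
    (List.getLast?_append_cons l x r).symm.trans h.2.2.2⟩

theorem IsSPath.prefix {l r : List V} (h : IsSPath E a b (l ++ x :: r)) :
    IsSPath E a x (l ++ [x]) := by
  obtain ⟨hc, hn, hh, _⟩ := h
  refine ⟨hc.prefix ⟨r, by simp⟩, hn.sublist (by simp), ?_, List.getLast?_concat⟩
  rw [← hh]
  cases l <;> simp

theorem IsSPath.reachIn_prefix {l r : List V} (h : IsSPath E a b (l ++ x :: r)) :
    ReachIn E {y | y ∉ r} a x := by
  have hn : ((l ++ [x]) ++ r).Nodup := by simpa using h.2.1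
  exact h.prefix.reachIn.mono fun y hy hyr => (List.nodup_append.1 hn).2.2 y hy y hyr rfl

theorem IsSPath.reachIn_suffix {l r : List V} (h : IsSPath E a b (l ++ x :: r)) :
    ReachIn E {y | y ∉ l} x b :=
  h.suffix.reachIn.mono fun y hy hyl => (List.nodup_append.1 h.2.1).2.2 y hyl y hy rfl

theorem exists_isSPath_of_reachIn {s : Set V} (h : ReachIn E s a b) (hb : b ∈ s) :
    ∃ p, IsSPath E a b p ∧ ∀ y ∈ p, y ∈ s := by
  induction h using Relation.ReflTransGen.head_induction_on with
  | refl => exact ⟨[b], ⟨List.isChain_singleton b, List.nodup_singleton b, rfl, rfl⟩, by simpa⟩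
  | @head a c hac _ ih =>
    obtain ⟨q, hq, hqs⟩ := ih
    by_cases haq : a ∈ q
    · obtain ⟨l, r, rfl⟩ := List.append_of_mem haq
      exact ⟨a :: r, hq.suffix, fun y hy => hqs y (by simp_all)⟩
    · refine ⟨a :: q, hq.cons hac.1 haq, ?_⟩
      simpa using ⟨hac.2.1, hqs⟩

theorem occBefore_iff :
    OccBefore E ι o a b ↔ ∃ l r, IoSPath E ι o (l ++ a :: r) ∧ b ∈ r := by
  constructor
  · rintro ⟨p, hp, hab⟩
    obtain ⟨r₁, r₂, rfl, ha, hb⟩ := List.cons_sublist_iff.1 hab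
    obtain ⟨l, t, rfl⟩ := List.append_of_mem ha
    exact ⟨l, t ++ r₂, by simpa using hp, by simp [List.singleton_sublist.1 hb]⟩
  · rintro ⟨l, r, hp, hb⟩
    exact ⟨_, hp, (List.cons_sublist_cons.2 (List.singleton_sublist.2 hb)).trans
      (List.sublist_append_right l _)⟩

theorem OccBefore.ne (h : OccBefore E ι o a b) : a ≠ b := by
  obtain ⟨l, r, hp, hb⟩ := occBefore_iff.1 h
  rintro rfl
  exact (List.nodup_cons.1 (List.nodup_append.1 hp.2.1).2.1).1 hb

theorem OccBefore.simpleNode_right (h : OccBefore E ι o a b) : SimpleNode E ι o b := by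
  obtain ⟨l, r, hp, hb⟩ := occBefore_iff.1 h
  exact ⟨_, hp, by simp [hb]⟩

theorem OccBefore.reachIn_input_left (h : OccBefore E ι o a b) : ReachIn E {b}ᶜ ι a := by
  obtain ⟨l, r, hp, hb⟩ := occBefore_iff.1 h
  exact hp.reachIn_prefix.mono fun y (hy : y ∉ r) (hyb : y = b) => hy (hyb ▸ hb)

theorem OccBefore.reachIn_right_output (h : OccBefore E ι o a b) : ReachIn E {a}ᶜ b o := by
  obtain ⟨l, r, hp, hb⟩ := occBefore_iff.1 h
  obtain ⟨r₁, r₂, rfl⟩ := List.append_of_mem hb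
  have hp' : IsSPath E ι o ((l ++ a :: r₁) ++ b :: r₂) := by simpa [IoSPath] using hp
  exact hp'.reachIn_suffix.mono fun y (hy : y ∉ l ++ a :: r₁) (hya : y = a) => hy (by simp [hya])

theorem SuperSimple.mem_of_reachIn {ρ : V} {s : Set V} (hρ : SuperSimple E ι o ρ)
    (h : ReachIn E s ι o) (ho : o ∈ s) : ρ ∈ s := by
  obtain ⟨p, hp, hps⟩ := exists_isSPath_of_reachIn h ho
  exact hps ρ (hρ p hp)

theorem SuperSimple.not_occBefore_of_occBefore {ρ c : V} (hρ : SuperSimple E ι o ρ)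
    (hcρ : OccBefore E ι o c ρ) : ¬ OccBefore E ι o ρ c := fun hρc =>
  have hreach : ReachIn E {ρ}ᶜ ι o :=
    hcρ.reachIn_input_left.trans hρc.reachIn_right_output
  have ho : o ∈ ({ρ}ᶜ : Set V) := hρc.reachIn_right_output.mem_of_mem hcρ.ne
  hρ.mem_of_reachIn hreach ho rfl

theorem OccBefore.trans_superSimple {c ρ : V} (hac : OccBefore E ι o a c)
    (hcρ : OccBefore E ι o c ρ) (hρ : SuperSimple E ι o ρ) (haρ : a ≠ ρ) :
    OccBefore E ι o a ρ := by
  obtain ⟨l, r, hp, hc⟩ := occBefore_iff.1 hac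
  rcases List.mem_append.1 (hρ _ hp) with hρl | hρr
  · obtain ⟨l₁, l₂, rfl⟩ := List.append_of_mem hρl
    exact absurd (occBefore_iff.2 ⟨l₁, l₂ ++ a :: r, by simpa using hp, by simp [hc]⟩)
      (hρ.not_occBefore_of_occBefore hcρ)
  · rcases List.mem_cons.1 hρr with rfl | hρr
    · exact absurd rfl haρ
    · exact occBefore_iff.2 ⟨l, r, hp, hρr⟩

theorem SLt.occBefore_of_superSimple {ρ : V} (hlt : SLt E ι o a ρ)
    (hρ : SuperSimple E ι o ρ) : OccBefore E ι o a ρ := by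
  obtain ⟨haρ, c, -, rfl | hac, rfl | hcρ⟩ := hlt
  · exact absurd rfl haρ
  · exact hcρ
  · exact hac
  · exact hac.trans_superSimple hcρ hρ haρ

theorem IsSigmaU.reachIn_compl {κ σ ρ : V} (hu : IsSigmaU E ι o κ σ)
    (hρ : SimpleNode E ι o ρ) (hσρ : σ ≠ ρ) : ReachIn E {ρ}ᶜ σ κ := by
  rcases hu with ⟨-, rfl⟩ | ⟨hκ, -, ⟨q, hq, -, hqapp⟩, -⟩
  · exact Relation.ReflTransGen.refl
  · refine hq.reachIn.mono fun y hy hyρ => ?_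
    obtain rfl : y = ρ := hyρ
    exact hqapp y hy hσρ.symm (fun h => hκ (h ▸ hρ)) hρ

end

theorem avoid_superSimple_general {V : Type*} (E : V → V → Prop) (ι o : V)
    (ρ κ σu : V)
    (hρ : SuperSimple E ι o ρ) (hu : IsSigmaU E ι o κ σu)
    (hlt : SLt E ι o σu ρ) :
    (∃ p, IsSPath E ι κ p ∧ ρ ∉ p) ∧ ¬ SuperSimple E ι κ ρ := by
  have hocc := hlt.occBefore_of_superSimple hρ
  have hσκ : ReachIn E {ρ}ᶜ σu κ := hu.reachIn_compl hocc.simpleNode_right hlt.1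
  obtain ⟨p, hp, hpρ⟩ :=
    exists_isSPath_of_reachIn (hocc.reachIn_input_left.trans hσκ) (hσκ.mem_of_mem hlt.1)
  have hρp : ρ ∉ p := fun h => hpρ ρ h rfl
  exact ⟨⟨p, hp, hρp⟩, fun hss => hρp (hss p hp)⟩

/-- If `σᵘ(κ) ≺ ρ` for a super-simple node `ρ` of `G`, then some simple path
from `ι` to `κ` avoids `ρ`; hence `ρ` is not super-simple in `G(κ)`. -/
theorem avoid_superSimple {V : Type*} (E : V → V → Prop) (ι o : V)
    (hcore : Core E ι o) (ρ κ σu : V)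
    (hρ : SuperSimple E ι o ρ) (hu : IsSigmaU E ι o κ σu)
    (hlt : SLt E ι o σu ρ) :
    (∃ p, IsSPath E ι κ p ∧ ρ ∉ p) ∧ ¬ SuperSimple E ι κ ρ :=
  avoid_superSimple_general E ι o ρ κ σu hρ hu hlt
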